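/- With E[K_n] = (θ/σ)[∏_{i=0}^{n-1}(θ+σ+i)/(θ+i) − 1] for σ ∈ (0,1), θ > 0, the sequence E[K_n]/n^σ converges as n → ∞ to Γ(θ+1)/(σ Γ(θ+σ)); in particular E[K_n] grows like a constant times n^σ. -/

import Mathlib

/-!
Euler's limit formula `Γ(s) = lim n^s n! / (s)_{n+1}` gives
`(a+b)_n / ((a)_n n^b) = (GammaSeq a n / GammaSeq (a+b) n) ((a+n)/(a+b+n)) → Γ(a)/Γ(a+b)`.
With `a = θ`, `b = σ` the term `(θ/σ)(-1)/n^σ` vanishes in the limit, and `θ Γ(θ) = Γ(θ+1)`.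
-/

open Filter Real

/-- The Pochhammer rising factorial `(a)_n`. -/
noncomputable def riseFac (a : ℝ) (n : ℕ) : ℝ := ∏ i ∈ Finset.range n, (a + i)

lemma riseFac_pos {a : ℝ} (ha : 0 < a) (n : ℕ) : 0 < riseFac a n :=
  Finset.prod_pos fun i _ => by positivity

lemma riseFac_succ (a : ℝ) (n : ℕ) : riseFac a (n + 1) = riseFac a n * (a + n) :=
  Finset.prod_range_succ _ _

lemma GammaSeq_eq_div_riseFac (s : ℝ) (n : ℕ) :
    GammaSeq s n = (n : ℝ) ^ s * n.factorial / (riseFac s n * (s + n)) := by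
  rw [← riseFac_succ]
  rfl

lemma tendsto_add_div_add_atTop (a c : ℝ) :
    Tendsto (fun n : ℕ => (a + n) / (c + n)) atTop (nhds 1) := by
  have hden : Tendsto (fun n : ℕ => c + (n : ℝ)) atTop atTop :=
    tendsto_atTop_add_const_left _ _ tendsto_natCast_atTop_atTop
  have hlim : Tendsto (fun n : ℕ => 1 + (a - c) / (c + n)) atTop (nhds (1 + 0)) :=
    tendsto_const_nhds.add (tendsto_const_nhds.div_atTop hden)
  rw [add_zero] at hlim
  refine hlim.congr' ?_
  filter_upwards [hden.eventually_gt_atTop 0] with n hn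
  field_simp
  ring

lemma riseFac_div_riseFac_div_rpow_eq_GammaSeq {a b : ℝ} (ha : 0 < a) (hab : 0 < a + b)
    {n : ℕ} (hn : n ≠ 0) :
    riseFac (a + b) n / riseFac a n / (n : ℝ) ^ b
      = GammaSeq a n / GammaSeq (a + b) n * ((a + n) / (a + b + n)) := by
  have hn0 : (0 : ℝ) < n := by positivity
  have := riseFac_pos ha n
  have := riseFac_pos hab n
  have := rpow_pos_of_pos hn0 a
  have := rpow_pos_of_pos hn0 b
  rw [GammaSeq_eq_div_riseFac, GammaSeq_eq_div_riseFac, rpow_add hn0]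
  field_simp

theorem tendsto_riseFac_div_riseFac_div_rpow {a b : ℝ} (ha : 0 < a) (hab : 0 < a + b) :
    Tendsto (fun n : ℕ => riseFac (a + b) n / riseFac a n / (n : ℝ) ^ b) atTop
      (nhds (Gamma a / Gamma (a + b))) := by
  have hGamma : Tendsto (fun n : ℕ => GammaSeq a n / GammaSeq (a + b) n) atTop
      (nhds (Gamma a / Gamma (a + b))) :=
    (GammaSeq_tendsto_Gamma a).div (GammaSeq_tendsto_Gamma (a + b)) (Gamma_pos_of_pos hab).ne'
  have hlim := hGamma.mul (tendsto_add_div_add_atTop a (a + b))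
  rw [mul_one] at hlim
  refine hlim.congr' ?_
  filter_upwards [eventually_ne_atTop 0] with n hn
  exact (riseFac_div_riseFac_div_rpow_eq_GammaSeq ha hab hn).symm

/-- With `E[K_n] = (θ/σ)((θ+σ)_n/(θ)_n − 1)` for `σ ∈ (0,1)`, `θ > 0`,
the sequence `E[K_n]/n^σ` converges to `Γ(θ+1)/(σ Γ(θ+σ))`. -/
theorem py_expected_distinct_asymptotics
    (σ θ : ℝ) (hσ : σ ∈ Set.Ioo (0:ℝ) 1) (hθ : 0 < θ) :
    Tendsto
      (fun n : ℕ => (θ / σ) * (riseFac (θ + σ) n / riseFac θ n - 1) / (n : ℝ) ^ σ)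
      atTop (nhds (Real.Gamma (θ + 1) / (σ * Real.Gamma (θ + σ)))) := by
  have hσ0 : 0 < σ := hσ.1
  have hratio := tendsto_riseFac_div_riseFac_div_rpow hθ (by linarith : 0 < θ + σ)
  have hvanish : Tendsto (fun n : ℕ => ((n : ℝ) ^ σ)⁻¹) atTop (nhds 0) :=
    ((tendsto_rpow_atTop hσ0).comp tendsto_natCast_atTop_atTop).inv_tendsto_atTop
  have hlim := tendsto_const_nhds (x := θ / σ) |>.mul (hratio.sub hvanish)
  simp only [mul_div_assoc, sub_div, one_div]
  convert hlim using 2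
  rw [sub_zero, Gamma_add_one hθ.ne']
  field_simp
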